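/- Let P(X^{(1)}, X^{(2)}) and Q(X^{(1)}, X^{(2)}) be polynomials in two sets of d variables, each homogeneous in each variable set separately. Then the operator norms of their symmetric tensorizations (viewed as matrices indexed by monomial multi-indices) satisfy ‖T_sym(PQ)‖_op ≤ ‖T_sym(P)‖_op · ‖T_sym(Q)‖_op. -/

import Mathlib

open MvPolynomial

/-- The exponent (monomial) associated to an index tuple within one variable sort. -/
noncomputable def expOf {d k : ℕ} (w : Fin k → Fin d) : Fin d →₀ ℕ :=
  ∑ i, Finsupp.single (w i) 1

/-- The number of index tuples giving the same monomial as `w`. -/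
noncomputable def countOf {d k : ℕ} (w : Fin k → Fin d) : ℕ :=
  Nat.card {w' : Fin k → Fin d // expOf w' = expOf w}

/-- The exponent in `ℝ[X⁽¹⁾,X⁽²⁾]` associated to a pair of index tuples. -/
noncomputable def expOf2 {d m₁ m₂ : ℕ} (w₁ : Fin m₁ → Fin d) (w₂ : Fin m₂ → Fin d) :
    (Fin d ⊕ Fin d) →₀ ℕ :=
  (∑ i, Finsupp.single (Sum.inl (w₁ i)) 1) + ∑ i, Finsupp.single (Sum.inr (w₂ i)) 1

/-- The symmetric tensorization of a polynomial that is homogeneous of degrees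
`(m₁,m₂)` in the two variable sets, viewed as a `d^{m₁} × d^{m₂}` matrix: each
coefficient is divided evenly among the index pairs producing its monomial. -/
noncomputable def Tsym {d : ℕ} (m₁ m₂ : ℕ) (p : MvPolynomial (Fin d ⊕ Fin d) ℝ) :
    Matrix (Fin m₁ → Fin d) (Fin m₂ → Fin d) ℝ :=
  fun w₁ w₂ => p.coeff (expOf2 w₁ w₂) / ((countOf w₁ : ℝ) * (countOf w₂ : ℝ))

/-- `p` is homogeneous of degree `m₁` in the first variable set and `m₂` in the
second. -/
def IsBiHomogeneous {d : ℕ} (p : MvPolynomial (Fin d ⊕ Fin d) ℝ) (m₁ m₂ : ℕ) : Prop :=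
  ∀ s ∈ p.support, (∑ i, s (Sum.inl i)) = m₁ ∧ (∑ i, s (Sum.inr i)) = m₂

/-- Operator (spectral) norm of a rectangular matrix via Euclidean spaces. -/
noncomputable def matOpNorm {d m₁ m₂ : ℕ}
    (M : Matrix (Fin m₁ → Fin d) (Fin m₂ → Fin d) ℝ) : ℝ :=
  ‖LinearMap.toContinuousLinearMap (Matrix.toEuclideanLin M)‖


/-!
Call `M` a representation of the polynomial `⟨M, X⁽¹⁾^{⊗m₁} ⊗ X⁽²⁾^{⊗m₂}⟩`. `T_sym(P)` represents
`P`, and for every matrix `M`, `T_sym` of the polynomial represented by `M` is the average of the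
copies of `M` whose row and column indices have their tensor factors permuted (orbit counting).
The Kronecker product `T_sym(P) ⊗ T_sym(Q)`, with tensor factors concatenated, represents `PQ`, so
`T_sym(PQ)` is an average of permuted copies of it. Permuting indices preserves the operator norm,
and `‖A ⊗ B‖ ≤ ‖A‖ ‖B‖` because `A ⊗ B = (A ⊗ 1)(1 ⊗ B)`.
-/

open Finset Matrix
open scoped Nat Kronecker Matrix.Norms.L2Operator

theorem EuclideanSpace.norm_toLp_comp_equiv {𝕜 ι κ : Type*} [RCLike 𝕜] [Fintype ι] [Fintype κ]
    (g : κ → 𝕜) (e : ι ≃ κ) : ‖WithLp.toLp 2 (g ∘ e)‖ = ‖WithLp.toLp 2 g‖ := by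
  simp only [EuclideanSpace.norm_eq, Function.comp_apply]
  rw [e.sum_comp fun i => ‖g i‖ ^ 2]

namespace Matrix

variable {𝕜 : Type*} [RCLike 𝕜] {l m n o p q : Type*} [Fintype l] [Fintype m] [Fintype n]
  [Fintype o] [Fintype p] [Fintype q] [DecidableEq n] [DecidableEq o] [DecidableEq p]
  [DecidableEq q]

theorem l2_opNorm_submatrix_le (M : Matrix m n 𝕜) (e : l ≃ m) (f : o ≃ n) :
    ‖M.submatrix e f‖ ≤ ‖M‖ := by
  rw [l2_opNorm_def, l2_opNorm_def]
  refine ContinuousLinearMap.opNorm_le_bound _ (norm_nonneg _) fun v => ?_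
  have h := M.l2_opNorm_mulVec (WithLp.toLp 2 (v ∘ f.symm))
  simp only [LinearEquiv.trans_apply, LinearMap.coe_toContinuousLinearMap', toLpLin_apply,
    submatrix_mulVec_equiv]
  rw [EuclideanSpace.norm_toLp_comp_equiv]
  exact h.trans_eq (by rw [EuclideanSpace.norm_toLp_comp_equiv]; rfl)

theorem l2_opNorm_kronecker_one_le (A : Matrix m n 𝕜) : ‖A ⊗ₖ (1 : Matrix p p 𝕜)‖ ≤ ‖A‖ := by
  rw [l2_opNorm_def]
  refine ContinuousLinearMap.opNorm_le_bound _ (norm_nonneg _) fun v => ?_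
  let col (k : p) : EuclideanSpace 𝕜 n := WithLp.toLp 2 fun j => v (j, k)
  have hcol : ∀ i k, ((A ⊗ₖ 1) *ᵥ v.ofLp) (i, k) = (A *ᵥ (col k).ofLp) i := by
    intro i k
    simp [mulVec, dotProduct, Fintype.sum_prod_type, one_apply, col]
  refine (pow_le_pow_iff_left₀ (norm_nonneg _) (by positivity) two_ne_zero).mp ?_
  calc _ = ∑ k, ‖(EuclideanSpace.equiv m 𝕜).symm (A *ᵥ (col k).ofLp)‖ ^ 2 := by
        simp only [EuclideanSpace.norm_sq_eq, Fintype.sum_prod_type]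
        rw [Finset.sum_comm]
        simp [hcol]
    _ ≤ ∑ k, (‖A‖ * ‖col k‖) ^ 2 := by
        gcongr with k
        exact A.l2_opNorm_mulVec (col k)
    _ = (‖A‖ * ‖v‖) ^ 2 := by
        simp only [mul_pow, ← Finset.mul_sum, EuclideanSpace.norm_sq_eq v, Fintype.sum_prod_type,
          col]
        rw [Finset.sum_comm]
        simp [EuclideanSpace.norm_sq_eq]

theorem l2_opNorm_kronecker_le (A : Matrix m n 𝕜) (B : Matrix o q 𝕜) :
    ‖A ⊗ₖ B‖ ≤ ‖A‖ * ‖B‖ := by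
  have hB : (1 : Matrix n n 𝕜) ⊗ₖ B =
      (B ⊗ₖ 1).submatrix (Equiv.prodComm n o) (Equiv.prodComm n q) := by
    ext ⟨i, j⟩ ⟨k, l⟩
    simp [mul_comm]
  calc ‖A ⊗ₖ B‖ = ‖A ⊗ₖ 1 * (1 : Matrix n n 𝕜) ⊗ₖ B‖ := by
        rw [← mul_kronecker_mul, Matrix.mul_one, Matrix.one_mul]
    _ ≤ ‖A ⊗ₖ 1‖ * ‖(1 : Matrix n n 𝕜) ⊗ₖ B‖ := l2_opNorm_mul _ _
    _ ≤ ‖A‖ * ‖B‖ := by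
        rw [hB]
        exact mul_le_mul (l2_opNorm_kronecker_one_le A)
          ((l2_opNorm_submatrix_le _ _ _).trans (l2_opNorm_kronecker_one_le B))
          (norm_nonneg _) (norm_nonneg _)

end Matrix

noncomputable def symmetrize {R α : Type*} [Field R] {m₁ m₂ : ℕ}
    (M : Matrix (Fin m₁ → α) (Fin m₂ → α) R) : Matrix (Fin m₁ → α) (Fin m₂ → α) R :=
  (m₁ ! * m₂ ! : R)⁻¹ •
    ∑ σ : Equiv.Perm (Fin m₁), ∑ τ : Equiv.Perm (Fin m₂), M.submatrix (· ∘ σ) (· ∘ τ)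

theorem l2_opNorm_symmetrize_le {𝕜 α : Type*} [RCLike 𝕜] [Fintype α] [DecidableEq α]
    {m₁ m₂ : ℕ} (M : Matrix (Fin m₁ → α) (Fin m₂ → α) 𝕜) : ‖symmetrize M‖ ≤ ‖M‖ := by
  have hperm (σ : Equiv.Perm (Fin m₁)) (τ : Equiv.Perm (Fin m₂)) :
      ‖M.submatrix (· ∘ σ) (· ∘ τ)‖ ≤ ‖M‖ :=
    M.l2_opNorm_submatrix_le (σ.symm.arrowCongr (Equiv.refl α)) (τ.symm.arrowCongr (Equiv.refl α))
  rw [symmetrize, norm_smul]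
  calc _ ≤ ‖(m₁ ! * m₂ ! : 𝕜)⁻¹‖ *
        ∑ _σ : Equiv.Perm (Fin m₁), ∑ _τ : Equiv.Perm (Fin m₂), ‖M‖ := by
        gcongr
        exact norm_sum_le_of_le _ fun σ _ => norm_sum_le_of_le _ fun τ _ => hperm σ τ
    _ = ‖M‖ := by
        simp only [sum_const, card_univ, Fintype.card_perm, Fintype.card_fin, nsmul_eq_mul,
          norm_inv, norm_mul, RCLike.norm_natCast]
        field_simp

theorem Finsupp.sumElim_eq_sumElim_iff {α β M : Type*} [Zero M] {a a' : α →₀ M}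
    {b b' : β →₀ M} : a.sumElim b = a'.sumElim b' ↔ a = a' ∧ b = b' := by
  rw [← Prod.mk.injEq]
  exact sumFinsuppEquivProdFinsupp.symm.injective.eq_iff (a := (a, b)) (b := (a', b'))

section Exponents

variable {d k m n m' n' : ℕ}

theorem expOf_apply (w : Fin k → Fin d) (j : Fin d) : expOf w j = #{i | w i = j} := by
  rw [card_filter]
  simp only [expOf, Finsupp.finsetSum_apply, Finsupp.single_apply]

theorem expOf_comp_perm (w : Fin k → Fin d) (σ : Equiv.Perm (Fin k)) :
    expOf (w ∘ σ) = expOf w :=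
  Equiv.sum_comp σ fun i => Finsupp.single (w i) 1

theorem exists_perm_of_expOf_eq {w w' : Fin k → Fin d} (h : expOf w' = expOf w) :
    ∃ σ : Equiv.Perm (Fin k), w' = w ∘ σ := by
  have hfiber (j : Fin d) : Fintype.card {i // w' i = j} = Fintype.card {i // w i = j} := by
    simp only [Fintype.card_subtype, ← expOf_apply, h]
  let σ := Equiv.ofFiberEquiv fun j => Fintype.equivOfCardEq (hfiber j)
  exact ⟨σ, funext fun i => (Equiv.ofFiberEquiv_map _ i).symm⟩

theorem expOf_eq_toFinsupp (w : Fin k → Fin d) :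
    expOf w = Multiset.toFinsupp (Multiset.map w univ.val) := by
  ext j
  rw [expOf_apply, Multiset.toFinsupp_apply, Multiset.count_map, Finset.card, filter_val]
  exact congrArg _ (Multiset.filter_congr fun _ _ => eq_comm)

theorem exists_expOf_eq (a : Fin d →₀ ℕ) (h : ∑ j, a j = k) :
    ∃ w : Fin k → Fin d, expOf w = a := by
  have hl : (Finsupp.toMultiset a).toList.length = k := by
    rw [Multiset.length_toList, Finsupp.card_toMultiset, Finsupp.sum_fintype _ _ fun _ => rfl]
    exact h
  subst hl
  refine ⟨(Finsupp.toMultiset a).toList.get, ?_⟩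
  rw [expOf_eq_toFinsupp, Fin.univ_val_map, List.ofFn_get, Multiset.coe_toList,
    Finsupp.toMultiset_toFinsupp]

theorem expOf_append (x : Fin m → Fin d) (y : Fin n → Fin d) :
    expOf (Fin.append x y) = expOf x + expOf y := by
  simp [expOf, Fin.sum_univ_add]

theorem expOf2_eq_sumElim (x : Fin m → Fin d) (y : Fin n → Fin d) :
    expOf2 x y = (expOf x).sumElim (expOf y) := by
  ext (j | j) <;> simp [expOf2, expOf, Finsupp.single_apply]

theorem expOf2_append (x : Fin m → Fin d) (x' : Fin m' → Fin d) (y : Fin n → Fin d)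
    (y' : Fin n' → Fin d) :
    expOf2 (Fin.append x x') (Fin.append y y') = expOf2 x y + expOf2 x' y' := by
  simp [expOf2_eq_sumElim, expOf_append]

theorem countOf_eq_card (w : Fin k → Fin d) :
    countOf w = #{x : Fin k → Fin d | expOf x = expOf w} := by
  rw [countOf, Nat.card_eq_fintype_card, Fintype.card_subtype]

theorem countOf_pos (w : Fin k → Fin d) : 0 < countOf w := by
  rw [countOf_eq_card]
  exact card_pos.mpr ⟨w, by simp⟩

/-- Double counting of the pairs `(x, σ)` with `expOf x = expOf w`: the orbit sum
`∑ σ, f (x ∘ σ)` is the same for every such `x`, and `x ↦ x ∘ σ` permutes them. -/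
theorem countOf_mul_sum_perm {R : Type*} [NonAssocSemiring R] (w : Fin k → Fin d)
    (f : (Fin k → Fin d) → R) :
    (countOf w : R) * ∑ σ : Equiv.Perm (Fin k), f (w ∘ σ) =
      k ! * ∑ x with expOf x = expOf w, f x := by
  have hclass (σ : Equiv.Perm (Fin k)) :
      ∑ x with expOf x = expOf w, f (x ∘ σ) = ∑ x with expOf x = expOf w, f x :=
    sum_nbij' (· ∘ σ) (· ∘ σ.symm) (by simp [expOf_comp_perm]) (by simp [expOf_comp_perm])
      (fun x _ => by simp [Function.comp_assoc]) (fun x _ => by simp [Function.comp_assoc])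
      fun _ _ => rfl
  have horbit : ∀ x ∈ ({x | expOf x = expOf w} : Finset (Fin k → Fin d)),
      ∑ σ : Equiv.Perm (Fin k), f (x ∘ σ) = ∑ σ : Equiv.Perm (Fin k), f (w ∘ σ) := by
    intro x hx
    obtain ⟨π, rfl⟩ := exists_perm_of_expOf_eq (mem_filter.mp hx).2
    exact Equiv.sum_comp (Equiv.mulLeft π) fun σ => f (w ∘ σ)
  calc (countOf w : R) * ∑ σ : Equiv.Perm (Fin k), f (w ∘ σ)
      = ∑ x with expOf x = expOf w, ∑ σ : Equiv.Perm (Fin k), f (x ∘ σ) := by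
        rw [sum_congr rfl horbit, sum_const, countOf_eq_card, nsmul_eq_mul]
    _ = ∑ σ : Equiv.Perm (Fin k), ∑ x with expOf x = expOf w, f x := by
        rw [sum_comm]
        exact sum_congr rfl fun σ _ => hclass σ
    _ = k ! * ∑ x with expOf x = expOf w, f x := by
        rw [sum_const, card_univ, Fintype.card_perm, Fintype.card_fin, nsmul_eq_mul]

end Exponents

section TensorPoly

variable {R : Type*} [CommSemiring R] {d m₁ m₂ n₁ n₂ : ℕ}

/-- `⟨M, flatten((X⁽¹⁾)^{⊗m₁}) ⊗ flatten((X⁽²⁾)^{⊗m₂})⟩`, the polynomial represented by `M`. -/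
noncomputable def tensorPoly (M : Matrix (Fin m₁ → Fin d) (Fin m₂ → Fin d) R) :
    MvPolynomial (Fin d ⊕ Fin d) R :=
  ∑ x, ∑ y, monomial (expOf2 x y) (M x y)

theorem coeff_sumElim_tensorPoly (M : Matrix (Fin m₁ → Fin d) (Fin m₂ → Fin d) R)
    (a b : Fin d →₀ ℕ) :
    (tensorPoly M).coeff (a.sumElim b) = ∑ x with expOf x = a, ∑ y with expOf y = b, M x y := by
  simp only [tensorPoly, coeff_sum, coeff_monomial, expOf2_eq_sumElim,
    Finsupp.sumElim_eq_sumElim_iff, sum_filter, ite_and, sum_ite_irrel, sum_const_zero]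

theorem tensorPoly_Tsym {P : MvPolynomial (Fin d ⊕ Fin d) ℝ} (hP : IsBiHomogeneous P m₁ m₂) :
    tensorPoly (Tsym m₁ m₂ P) = P := by
  ext s
  obtain ⟨⟨a, b⟩, rfl⟩ := Finsupp.sumFinsuppEquivProdFinsupp.symm.surjective s
  change (tensorPoly _).coeff (a.sumElim b) = P.coeff (a.sumElim b)
  rw [coeff_sumElim_tensorPoly]
  set X : Finset (Fin m₁ → Fin d) := {x | expOf x = a}
  set Y : Finset (Fin m₂ → Fin d) := {y | expOf y = b}
  have hentry : ∀ x ∈ X, ∀ y ∈ Y, Tsym m₁ m₂ P x y = P.coeff (a.sumElim b) / (#X * #Y) := by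
    intro x hx y hy
    rw [Tsym, expOf2_eq_sumElim, countOf_eq_card, countOf_eq_card, (mem_filter.1 hx).2,
      (mem_filter.1 hy).2]
  rw [sum_congr rfl fun x hx => sum_congr rfl (hentry x hx)]
  simp only [sum_const, nsmul_eq_mul]
  rcases eq_or_ne (P.coeff (a.sumElim b)) 0 with h0 | h0
  · simp [h0]
  obtain ⟨ha, hb⟩ := hP _ (mem_support_iff.mpr h0)
  obtain ⟨x, hx⟩ := exists_expOf_eq a (by simpa using ha)
  obtain ⟨y, hy⟩ := exists_expOf_eq b (by simpa using hb)
  have hX : (#X : ℝ) ≠ 0 := Nat.cast_ne_zero.mpr (card_ne_zero_of_mem (a := x) (by simp [X, hx]))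
  have hY : (#Y : ℝ) ≠ 0 := Nat.cast_ne_zero.mpr (card_ne_zero_of_mem (a := y) (by simp [Y, hy]))
  field_simp

theorem tensorPoly_kronecker (A : Matrix (Fin m₁ → Fin d) (Fin m₂ → Fin d) R)
    (B : Matrix (Fin n₁ → Fin d) (Fin n₂ → Fin d) R) :
    tensorPoly ((A ⊗ₖ B).submatrix (Fin.appendEquiv m₁ n₁).symm (Fin.appendEquiv m₂ n₂).symm) =
      tensorPoly A * tensorPoly B := by
  calc _ = ∑ p : _ × _, ∑ q : _ × _,
        monomial (expOf2 (Fin.append p.1 p.2) (Fin.append q.1 q.2)) (A p.1 q.1 * B p.2 q.2) := by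
        rw [tensorPoly, ← (Fin.appendEquiv m₁ n₁).sum_comp]
        refine sum_congr rfl fun p _ => ?_
        rw [← (Fin.appendEquiv m₂ n₂).sum_comp]
        simp only [submatrix_apply, Equiv.symm_apply_apply]
        rfl
    _ = tensorPoly A * tensorPoly B := by
        simp only [tensorPoly, sum_mul_sum, Fintype.sum_prod_type, expOf2_append, monomial_mul]

theorem Tsym_tensorPoly (M : Matrix (Fin m₁ → Fin d) (Fin m₂ → Fin d) ℝ) :
    Tsym m₁ m₂ (tensorPoly M) = symmetrize M := by
  ext w₁ w₂
  have hsum : (countOf w₁ : ℝ) * countOf w₂ *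
        ∑ σ : Equiv.Perm (Fin m₁), ∑ τ : Equiv.Perm (Fin m₂), M (w₁ ∘ σ) (w₂ ∘ τ) =
      m₁ ! * m₂ ! * (tensorPoly M).coeff (expOf2 w₁ w₂) := by
    rw [mul_right_comm, countOf_mul_sum_perm w₁ fun x => ∑ τ : Equiv.Perm (Fin m₂), M x (w₂ ∘ τ),
      mul_comm, mul_left_comm, mul_sum, expOf2_eq_sumElim,
      coeff_sumElim_tensorPoly]
    simp only [countOf_mul_sum_perm w₂, mul_assoc, mul_sum]
  have hc₁ : (countOf w₁ : ℝ) ≠ 0 := Nat.cast_ne_zero.mpr (countOf_pos w₁).ne'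
  have hc₂ : (countOf w₂ : ℝ) ≠ 0 := Nat.cast_ne_zero.mpr (countOf_pos w₂).ne'
  simp only [Tsym, symmetrize, Matrix.smul_apply, Matrix.sum_apply, submatrix_apply, smul_eq_mul]
  field_simp
  linear_combination -hsum

end TensorPoly

theorem matOpNorm_eq_l2_opNorm {d m₁ m₂ : ℕ} (M : Matrix (Fin m₁ → Fin d) (Fin m₂ → Fin d) ℝ) :
    matOpNorm M = ‖M‖ :=
  rfl

/-- Submultiplicativity of the operator norm of symmetric tensorizations:
`‖T_sym(PQ)‖_op ≤ ‖T_sym(P)‖_op · ‖T_sym(Q)‖_op`. -/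
theorem tsym_opNorm_mul {d m₁ m₂ n₁ n₂ : ℕ} (P Q : MvPolynomial (Fin d ⊕ Fin d) ℝ)
    (hP : IsBiHomogeneous P m₁ m₂) (hQ : IsBiHomogeneous Q n₁ n₂) :
    matOpNorm (Tsym (m₁+n₁) (m₂+n₂) (P*Q)) ≤
      matOpNorm (Tsym m₁ m₂ P) * matOpNorm (Tsym n₁ n₂ Q) := by
  set A := Tsym m₁ m₂ P
  set B := Tsym n₁ n₂ Q
  have hPQ : P * Q = tensorPoly
      ((A ⊗ₖ B).submatrix (Fin.appendEquiv m₁ n₁).symm (Fin.appendEquiv m₂ n₂).symm) := by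
    rw [tensorPoly_kronecker, tensorPoly_Tsym hP, tensorPoly_Tsym hQ]
  simp only [matOpNorm_eq_l2_opNorm]
  rw [hPQ, Tsym_tensorPoly]
  calc _ ≤ ‖(A ⊗ₖ B).submatrix (Fin.appendEquiv m₁ n₁).symm (Fin.appendEquiv m₂ n₂).symm‖ :=
        l2_opNorm_symmetrize_le _
    _ ≤ ‖A ⊗ₖ B‖ := l2_opNorm_submatrix_le _ _ _
    _ ≤ ‖A‖ * ‖B‖ := l2_opNorm_kronecker_le A B
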